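/- arXiv:1810.04568 — 2 statements merged into one kernel-verified Lean document; each statement's English description precedes it below -/
import Mathlib

section
/- Let ν > 1/2 and x > 0. Then L_ν(x) − a_{ν−1,0} x^{ν+1} < (x^{ν+1} / (√π · 2^ν · Γ(ν + 1/2))) · F(x²/4) < 2ν L_ν(x) − (2ν − 1) L_{ν+2}(x) + b_{ν−1,0} x^{ν+3} − c_{ν−1,0} x^{ν+1}, where F(y) = ₂F₃(1, 1; 3/2, 2, ν + 1/2; y). -/
/-- The modified Struve function of the first kind. -/
noncomputable def modStruveL (ν x : ℝ) : ℝ :=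
  ∑' k : ℕ, (x / 2) ^ (ν + 2 * (k : ℝ) + 1) /
    (Real.Gamma ((k : ℝ) + 3 / 2) * Real.Gamma ((k : ℝ) + ν + 3 / 2))

/-- The constant `a_{ν,n}`. -/
noncomputable def aConst (ν n : ℝ) : ℝ :=
  (2 * ν + n + 1) /
    (Real.sqrt Real.pi * (2 : ℝ) ^ (ν + n + 2) * (n + 2) * (ν + n + 1) *
      Real.Gamma (ν + n + 5 / 2))

/-- The constant `b_{ν,n}`. -/
noncomputable def bConst (ν n : ℝ) : ℝ :=
  ((2 * ν + n + 1) * (2 * ν + n + 3)) /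
    (Real.sqrt Real.pi * (2 : ℝ) ^ (ν + n + 4) * (n + 1) * (n + 4) * (ν + n + 3) *
      Real.Gamma (ν + n + 9 / 2))

/-- The constant `c_{ν,n}`. -/
noncomputable def cConst (ν n : ℝ) : ℝ :=
  (2 * ν + n + 1) /
    (Real.sqrt Real.pi * (2 : ℝ) ^ (ν + n + 1) * (n + 1) * (n + 2) *
      Real.Gamma (ν + n + 5 / 2))

/-- The Pochhammer symbol `(a)_k = a (a+1) ⋯ (a+k-1)`. -/
noncomputable def poch (a : ℝ) (k : ℕ) : ℝ :=
  ∏ i ∈ Finset.range k, (a + (i : ℝ))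

/-- The generalized hypergeometric function ₂F₃(1, 1; 3/2, 2, c; y). -/
noncomputable def hyp2F3 (c y : ℝ) : ℝ :=
  ∑' k : ℕ, (poch 1 k * poch 1 k / (poch (3 / 2) k * poch 2 k * poch c k)) *
    y ^ k / (Nat.factorial k : ℝ)

/-!
Write `L_ν(x) = ∑ u_k` and the middle quantity as `∑ m_k` with
`m_k = (x/2)^(ν+2k+1) / ((k+1) Γ(k+3/2) Γ(k+ν+1/2))`. By `Γ(s+1) = s Γ(s)`,
`u_k = (k+1)/(k+ν+1/2) · m_k ≤ m_k` for `ν ≥ 1/2`, which gives the lower bound.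
The terms of `L_{ν+2}` are also rational multiples of the `m_{k+1}`, and a rational-function
computation gives `m_{k+1} + (2ν-1) u^{(ν+2)}_k < 2ν u_{k+1}`, with gap
`(ν² - 1/4)(2k+3) / ((k+ν+5/2)(k+ν+3/2)) · m_{k+1}`, while the first terms satisfy
`m_0 + c_{ν-1,0} x^(ν+1) = 2ν u_0` exactly. Summing, the upper bound holds even without the
positive `b`-term.
-/

open Real
open scoped Nat

lemma poch_succ (a : ℝ) (k : ℕ) : poch a (k + 1) = poch a k * (a + k) :=
  Finset.prod_range_succ _ _

lemma poch_pos {a : ℝ} (ha : 0 < a) (k : ℕ) : 0 < poch a k :=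
  Finset.prod_pos fun _ _ => by positivity

lemma poch_le_poch {a b : ℝ} (ha : 0 ≤ a) (hab : a ≤ b) (k : ℕ) : poch a k ≤ poch b k :=
  Finset.prod_le_prod (fun _ _ => by positivity) fun _ _ => by linarith

lemma poch_one (k : ℕ) : poch 1 k = k ! := by
  induction k with
  | zero => simp [poch]
  | succ k ih => rw [poch_succ, ih, Nat.factorial_succ]; push_cast; ring

lemma poch_two (k : ℕ) : poch 2 k = (k + 1)! := by
  induction k with
  | zero => simp [poch]
  | succ k ih => rw [poch_succ, ih, Nat.factorial_succ (k + 1)]; push_cast; ring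

lemma one_le_poch {a : ℝ} (ha : 1 ≤ a) (k : ℕ) : 1 ≤ poch a k :=
  calc (1 : ℝ) ≤ k ! := by exact_mod_cast k.factorial_pos
    _ = poch 1 k := (poch_one k).symm
    _ ≤ poch a k := poch_le_poch zero_le_one ha k

lemma Gamma_add_nat {a : ℝ} (ha : 0 < a) (k : ℕ) : Gamma (a + k) = poch a k * Gamma a := by
  induction k with
  | zero => simp [poch]
  | succ k ih =>
    rw [Nat.cast_succ, ← add_assoc, Gamma_add_one (by positivity), ih, poch_succ]
    ring

lemma Gamma_three_halves : Gamma (3 / 2) = √π / 2 := by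
  rw [show (3 / 2 : ℝ) = 1 / 2 + 1 by norm_num, Gamma_add_one (by norm_num), Gamma_one_half_eq]
  ring

lemma summable_hyp2F3 {c y : ℝ} (hc : 1 ≤ c) (hy : 0 ≤ y) :
    Summable fun k : ℕ =>
      poch 1 k * poch 1 k / (poch (3 / 2) k * poch 2 k * poch c k) * y ^ k / k ! := by
  refine (summable_pow_div_factorial y).of_nonneg_of_le (fun k => ?_) fun k => ?_
  all_goals
    have h1 := poch_pos one_pos k
    have h32 := poch_pos (by norm_num : (0 : ℝ) < 3 / 2) k
    have h2 := poch_pos two_pos k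
    have hck := poch_pos (by linarith : 0 < c) k
  · positivity
  · have hcoeff : poch 1 k * poch 1 k ≤ poch (3 / 2) k * poch 2 k * poch c k := by
      rw [← mul_one (poch 1 k * poch 1 k)]
      exact mul_le_mul (mul_le_mul (poch_le_poch zero_le_one (by norm_num) k)
        (poch_le_poch zero_le_one one_le_two k) h1.le h32.le) (one_le_poch hc k) zero_le_one
        (by positivity)
    calc _ ≤ 1 * y ^ k / k ! := by
          gcongr
          exact div_le_one_of_le₀ hcoeff (by positivity)
      _ = y ^ k / k ! := by rw [one_mul]

noncomputable def modStruveTerm (ν x : ℝ) (k : ℕ) : ℝ :=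
  (x / 2) ^ (ν + 2 * (k : ℝ) + 1) / (Gamma (k + 3 / 2) * Gamma (k + ν + 3 / 2))

/-- The `k`-th term of `x ^ (ν + 1) / (√π 2 ^ ν Γ(ν + 1/2)) · ₂F₃(1, 1; 3/2, 2, ν + 1/2; x²/4)`,
written in the Gamma form of the Struve series (see `hyp2F3Term_eq`). -/
noncomputable def hyp2F3Term (ν x : ℝ) (k : ℕ) : ℝ :=
  (x / 2) ^ (ν + 2 * (k : ℝ) + 1) / ((k + 1) * Gamma (k + 3 / 2) * Gamma (k + ν + 1 / 2))

section Terms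

variable {ν x : ℝ}

lemma modStruveL_eq_tsum : modStruveL ν x = ∑' k, modStruveTerm ν x k := rfl

lemma half_rpow_add_two_mul (hx : 0 < x) (c : ℝ) (k : ℕ) :
    (x / 2) ^ (c + 2 * (k : ℝ)) = (x / 2) ^ c * (x ^ 2 / 4) ^ k := by
  rw [rpow_add (by positivity), show 2 * (k : ℝ) = ((2 * k : ℕ) : ℝ) by push_cast; ring,
    rpow_natCast, pow_mul]
  ring

lemma hyp2F3Term_eq (hν : -1 / 2 < ν) (hx : 0 < x) (k : ℕ) :
    x ^ (ν + 1) / (√π * 2 ^ ν * Gamma (ν + 1 / 2)) *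
        (poch 1 k * poch 1 k / (poch (3 / 2) k * poch 2 k * poch (ν + 1 / 2) k) *
          (x ^ 2 / 4) ^ k / k !) =
      hyp2F3Term ν x k := by
  have hΓ : 0 < Gamma (ν + 1 / 2) := Gamma_pos_of_pos (by linarith)
  have h32 := poch_pos (by norm_num : (0 : ℝ) < 3 / 2) k
  have hpν := poch_pos (by linarith : 0 < ν + 1 / 2) k
  have hpow : (x / 2) ^ (ν + 1) = x ^ (ν + 1) / (2 ^ ν * 2) := by
    rw [div_rpow hx.le zero_le_two, rpow_add_one two_ne_zero]
  unfold hyp2F3Term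
  rw [show ν + 2 * (k : ℝ) + 1 = ν + 1 + 2 * k by ring, half_rpow_add_two_mul hx, hpow,
    show (k : ℝ) + 3 / 2 = 3 / 2 + k by ring, Gamma_add_nat (by norm_num) k, Gamma_three_halves,
    show ((k : ℝ) + ν + 1 / 2) = ν + 1 / 2 + k by ring, Gamma_add_nat (by linarith) k,
    poch_one, poch_two, Nat.factorial_succ]
  push_cast
  field_simp

lemma hyp2F3Term_zero (hν : -1 / 2 < ν) (hx : 0 < x) :
    hyp2F3Term ν x 0 = x ^ (ν + 1) / (√π * 2 ^ ν * Gamma (ν + 1 / 2)) := by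
  simpa [poch] using (hyp2F3Term_eq hν hx 0).symm

lemma hasSum_hyp2F3Term (hν : 1 / 2 ≤ ν) (hx : 0 < x) :
    HasSum (hyp2F3Term ν x)
      (x ^ (ν + 1) / (√π * 2 ^ ν * Gamma (ν + 1 / 2)) * hyp2F3 (ν + 1 / 2) (x ^ 2 / 4)) := by
  rw [← funext (hyp2F3Term_eq (ν := ν) (by linarith) hx)]
  exact (summable_hyp2F3 (by linarith) (by positivity)).hasSum.mul_left _

lemma hyp2F3Term_pos (hν : -1 / 2 < ν) (hx : 0 < x) (k : ℕ) : 0 < hyp2F3Term ν x k := by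
  have : 0 < Gamma (k + ν + 1 / 2) := Gamma_pos_of_pos (by linarith [k.cast_nonneg (α := ℝ)])
  unfold hyp2F3Term
  positivity

lemma modStruveTerm_eq (hν : -1 / 2 < ν) (k : ℕ) :
    modStruveTerm ν x k = (k + 1) / (k + ν + 1 / 2) * hyp2F3Term ν x k := by
  have hk : 0 < (k : ℝ) + ν + 1 / 2 := by linarith [k.cast_nonneg (α := ℝ)]
  have : 0 < Gamma (k + ν + 1 / 2) := Gamma_pos_of_pos hk
  unfold modStruveTerm hyp2F3Term
  rw [show (k : ℝ) + ν + 3 / 2 = k + ν + 1 / 2 + 1 by ring, Gamma_add_one hk.ne']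
  field_simp

lemma modStruveTerm_add_two_eq (hν : -1 / 2 < ν) (k : ℕ) :
    modStruveTerm (ν + 2) x k =
      (k + 2) * (k + 3 / 2) / ((k + ν + 5 / 2) * (k + ν + 3 / 2)) * hyp2F3Term ν x (k + 1) := by
  have hk : 0 < (k : ℝ) + ν + 3 / 2 := by linarith [k.cast_nonneg (α := ℝ)]
  have : 0 < Gamma (k + ν + 3 / 2) := Gamma_pos_of_pos hk
  have : 0 < Gamma (k + 3 / 2) := Gamma_pos_of_pos (by positivity)
  unfold modStruveTerm hyp2F3Term
  push_cast
  rw [show (k : ℝ) + (ν + 2) + 3 / 2 = k + ν + 3 / 2 + 1 + 1 by ring,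
    show (k : ℝ) + 1 + 3 / 2 = k + 3 / 2 + 1 by ring,
    show (k : ℝ) + 1 + ν + 1 / 2 = k + ν + 3 / 2 by ring,
    show ν + 2 + 2 * (k : ℝ) + 1 = ν + 2 * (k + 1) + 1 by ring,
    Gamma_add_one (by positivity : (k : ℝ) + 3 / 2 ≠ 0),
    Gamma_add_one (by positivity : (k : ℝ) + ν + 3 / 2 + 1 ≠ 0), Gamma_add_one hk.ne']
  field_simp
  ring

end Terms

section Inequalities

variable {ν x : ℝ}

lemma modStruveTerm_le_hyp2F3Term (hν : 1 / 2 ≤ ν) (hx : 0 < x) (k : ℕ) :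
    modStruveTerm ν x k ≤ hyp2F3Term ν x k := by
  have hk : 0 < (k : ℝ) + ν + 1 / 2 := by linarith [k.cast_nonneg (α := ℝ)]
  rw [modStruveTerm_eq (by linarith)]
  exact mul_le_of_le_one_left (hyp2F3Term_pos (ν := ν) (by linarith) hx k).le
    ((div_le_one hk).2 (by linarith))

lemma summable_modStruveTerm (hν : 1 / 2 ≤ ν) (hx : 0 < x) : Summable (modStruveTerm ν x) := by
  refine (hasSum_hyp2F3Term hν hx).summable.of_nonneg_of_le (fun k => ?_)
    (modStruveTerm_le_hyp2F3Term hν hx)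
  rw [modStruveTerm_eq (by linarith)]
  exact mul_nonneg (by positivity) (hyp2F3Term_pos (ν := ν) (by linarith) hx k).le

lemma modStruveL_le_hyp2F3 (hν : 1 / 2 ≤ ν) (hx : 0 < x) :
    modStruveL ν x ≤
      x ^ (ν + 1) / (√π * 2 ^ ν * Gamma (ν + 1 / 2)) * hyp2F3 (ν + 1 / 2) (x ^ 2 / 4) :=
  hasSum_le (modStruveTerm_le_hyp2F3Term hν hx) (summable_modStruveTerm hν hx).hasSum
    (hasSum_hyp2F3Term hν hx)

lemma hyp2F3Term_succ_add_lt (hν : 1 / 2 < ν) (hx : 0 < x) (k : ℕ) :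
    hyp2F3Term ν x (k + 1) + (2 * ν - 1) * modStruveTerm (ν + 2) x k <
      2 * ν * modStruveTerm ν x (k + 1) := by
  have hk : (0 : ℝ) ≤ k := k.cast_nonneg
  have gap : 2 * ν * ((k + 2) / (k + ν + 3 / 2)) - 1 -
      (2 * ν - 1) * ((k + 2) * (k + 3 / 2) / ((k + ν + 5 / 2) * (k + ν + 3 / 2))) =
      (ν ^ 2 - 1 / 4) * (2 * k + 3) / ((k + ν + 5 / 2) * (k + ν + 3 / 2)) := by
    field_simp
    ring
  have hgap : 0 < (ν ^ 2 - 1 / 4) * (2 * k + 3) / ((k + ν + 5 / 2) * (k + ν + 3 / 2)) := by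
    apply div_pos (mul_pos (by nlinarith) (by positivity))
    exact mul_pos (by linarith) (by linarith)
  have hterm := hyp2F3Term_pos (ν := ν) (by linarith) hx (k + 1)
  rw [modStruveTerm_add_two_eq (ν := ν) (by linarith), modStruveTerm_eq (ν := ν) (by linarith)]
  push_cast
  rw [show (k : ℝ) + 1 + 1 = k + 2 by ring, show (k : ℝ) + 1 + ν + 1 / 2 = k + ν + 3 / 2 by ring]
  nlinarith [mul_pos hgap hterm]

lemma cConst_sub_one_zero_mul (hν : -1 / 2 < ν) (hx : 0 < x) :
    cConst (ν - 1) 0 * x ^ (ν + 1) = (ν - 1 / 2) / (ν + 1 / 2) * hyp2F3Term ν x 0 := by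
  have hΓ : 0 < Gamma (ν + 1 / 2) := Gamma_pos_of_pos (by linarith)
  have : 0 < ν + 1 / 2 := by linarith
  rw [hyp2F3Term_zero hν hx]
  unfold cConst
  rw [show ν - 1 + 0 + 1 = ν by ring, show ν - 1 + 0 + 5 / 2 = ν + 1 / 2 + 1 by ring,
    Gamma_add_one this.ne']
  field_simp
  ring

lemma hyp2F3Term_zero_add_cConst (hν : -1 / 2 < ν) (hx : 0 < x) :
    hyp2F3Term ν x 0 + cConst (ν - 1) 0 * x ^ (ν + 1) = 2 * ν * modStruveTerm ν x 0 := by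
  have : ν * 2 + 1 ≠ 0 := by linarith
  rw [cConst_sub_one_zero_mul hν hx, modStruveTerm_eq hν]
  simp only [Nat.cast_zero, zero_add]
  field_simp
  ring

lemma hyp2F3_add_lt (hν : 1 / 2 < ν) (hx : 0 < x) :
    x ^ (ν + 1) / (√π * 2 ^ ν * Gamma (ν + 1 / 2)) * hyp2F3 (ν + 1 / 2) (x ^ 2 / 4) +
        (2 * ν - 1) * modStruveL (ν + 2) x <
      2 * ν * modStruveL ν x - cConst (ν - 1) 0 * x ^ (ν + 1) := by
  have hH := (hasSum_nat_add_iff' 1).2 (hasSum_hyp2F3Term hν.le hx)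
  have hL := (hasSum_nat_add_iff' 1).2 (summable_modStruveTerm hν.le hx).hasSum
  have hL₂ := (summable_modStruveTerm (ν := ν + 2) (by linarith) hx).hasSum
  have hlt := hasSum_lt (fun k => (hyp2F3Term_succ_add_lt hν hx k).le)
    (hyp2F3Term_succ_add_lt hν hx 0) (hH.add (hL₂.mul_left (2 * ν - 1))) (hL.mul_left (2 * ν))
  simp only [Finset.sum_range_one] at hlt
  have := hyp2F3Term_zero_add_cConst (by linarith : -1 / 2 < ν) hx
  rw [modStruveL_eq_tsum, modStruveL_eq_tsum]
  linarith

lemma aConst_sub_one_zero_pos (hν : 1 / 2 < ν) : 0 < aConst (ν - 1) 0 := by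
  have : 0 < Gamma (ν - 1 + 0 + 5 / 2) := Gamma_pos_of_pos (by linarith)
  have : 0 < ν - 1 + 0 + 1 := by linarith
  exact div_pos (by linarith) (by positivity)

lemma bConst_sub_one_zero_pos (hν : 1 / 2 < ν) : 0 < bConst (ν - 1) 0 := by
  have : 0 < Gamma (ν - 1 + 0 + 9 / 2) := Gamma_pos_of_pos (by linarith)
  have : 0 < ν - 1 + 0 + 3 := by linarith
  exact div_pos (by nlinarith) (by positivity)

end Inequalities

theorem struve_hypergeometric_double_inequality (ν x : ℝ) (hν : ν > 1 / 2) (hx : x > 0) :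
    modStruveL ν x - aConst (ν - 1) 0 * x ^ (ν + 1) <
      (x ^ (ν + 1) / (Real.sqrt Real.pi * (2 : ℝ) ^ ν * Real.Gamma (ν + 1 / 2))) *
        hyp2F3 (ν + 1 / 2) (x ^ 2 / 4) ∧
    (x ^ (ν + 1) / (Real.sqrt Real.pi * (2 : ℝ) ^ ν * Real.Gamma (ν + 1 / 2))) *
        hyp2F3 (ν + 1 / 2) (x ^ 2 / 4) <
      2 * ν * modStruveL ν x - (2 * ν - 1) * modStruveL (ν + 2) x +
        bConst (ν - 1) 0 * x ^ (ν + 3) - cConst (ν - 1) 0 * x ^ (ν + 1) := by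
  have ha := mul_pos (aConst_sub_one_zero_pos hν) (rpow_pos_of_pos hx (ν + 1))
  have hb := mul_pos (bConst_sub_one_zero_pos hν) (rpow_pos_of_pos hx (ν + 3))
  have hlower := modStruveL_le_hyp2F3 hν.le hx
  have hupper := hyp2F3_add_lt hν hx
  constructor <;> linarith
end

section
/- Let n > -1, ν > -(n+1)/2 and x > 0. Then the derivative of the function x ↦ x^{-ν} L_{ν+n+1}(x) at x equals ((n+1)/(2(ν+n+1))) x^{-ν} L_{ν+n}(x) + ((2ν+n+1)/(2(ν+n+1))) x^{-ν} L_{ν+n+2}(x) + (n+2) a_{ν,n} x^{n+1}. -/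
/-!
Factoring out the real power, `L_μ(x) = (x/2)^μ S_μ(x)` for `x > 0`, where `S_μ` is a power
series in `x/2` with natural exponents and infinite radius, so it can be differentiated termwise:
`S_μ' = D_μ`. Splitting off the constant term of `D_μ` gives
`D_μ = 1/(√π Γ(μ+3/2)) + (x/2) S_{μ+1}`, and `1/Γ(s) = s/Γ(s+1)` gives the three-term
recurrence `S_μ = (μ+1) S_{μ+1} + (x/2) D_{μ+1}`; these are the classical recurrences
`(x^{-μ} L_μ)' = x^{-μ} L_{μ+1} + 2^{-μ}/(√π Γ(μ+3/2))` and
`L_{μ-1} - L_{μ+1} = (2μ/x) L_μ + (x/2)^μ/(√π Γ(μ+3/2))` in disguise.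
With `μ = ν+n+1` we have `x^{-ν} L_μ(x) = 2^{-μ} x^{n+1} S_μ(x)`; differentiating, and
eliminating `S_{ν+n}` and `D_μ` with the two relations, gives the formula (the two weights sum
to `1`).
-/

open Real Filter Topology

/-- Valid for every `s`, poles included, because `Gamma` is `0` there. -/
theorem Real.inv_Gamma_eq_self_mul_inv_Gamma_add_one (s : ℝ) :
    (Gamma s)⁻¹ = s * (Gamma (s + 1))⁻¹ := by
  rcases ne_or_eq s 0 with h | rfl
  · rw [Gamma_add_one h, mul_inv, mul_inv_cancel_left₀ h]
  · rw [zero_add, Gamma_zero, inv_zero, zero_mul]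

theorem summable_pow_div_Gamma_mul_Gamma (r a b : ℝ) :
    Summable fun k : ℕ => r ^ k / (Gamma (k + a) * Gamma (k + b)) := by
  refine summable_of_ratio_norm_eventually_le (r := 1 / 2) (by norm_num) ?_
  filter_upwards [tendsto_natCast_atTop_atTop.eventually_ge_atTop (2 * |r| + 1 - a),
    tendsto_natCast_atTop_atTop.eventually_ge_atTop (1 - b)] with k hka hkb
  have ha : 2 * |r| + 1 ≤ k + a := by linarith
  have hb : 1 ≤ k + b := by linarith
  have hGa := Gamma_pos_of_pos (show 0 < k + a by linarith [abs_nonneg r])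
  have hGb := Gamma_pos_of_pos (show 0 < k + b by linarith)
  have hstep : r ^ (k + 1) / (Gamma ((k + 1 : ℕ) + a) * Gamma ((k + 1 : ℕ) + b)) =
      r ^ k / (Gamma (k + a) * Gamma (k + b)) * (r / ((k + a) * (k + b))) := by
    rw [Nat.cast_succ, add_right_comm _ 1 a, add_right_comm _ 1 b,
      Gamma_add_one (by linarith [abs_nonneg r]), Gamma_add_one (by linarith)]
    field_simp
    ring
  have hprod : 0 < (k + a) * (k + b) := by nlinarith [abs_nonneg r]
  have hratio : |r| / ((k + a) * (k + b)) ≤ 1 / 2 := by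
    rw [div_le_iff₀ hprod]
    nlinarith [abs_nonneg r]
  rw [hstep, norm_mul, mul_comm (1 / 2 : ℝ)]
  refine mul_le_mul_of_nonneg_left ?_ (norm_nonneg _)
  rwa [Real.norm_eq_abs, abs_div, abs_of_pos hprod]

noncomputable def struveSeries (μ x : ℝ) : ℝ :=
  ∑' k : ℕ, (x / 2) ^ (2 * k + 1) / (Gamma (k + 3 / 2) * Gamma (k + μ + 3 / 2))

noncomputable def struveDerivSeries (μ x : ℝ) : ℝ :=
  ∑' k : ℕ, (x / 2) ^ (2 * k) / (Gamma (k + 1 / 2) * Gamma (k + μ + 3 / 2))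

section

variable (μ x : ℝ)

theorem summable_struveDerivSeries :
    Summable fun k : ℕ =>
      (x / 2) ^ (2 * k) / (Gamma (k + 1 / 2) * Gamma (k + μ + 3 / 2)) := by
  simpa only [pow_mul, add_assoc] using summable_pow_div_Gamma_mul_Gamma ((x / 2) ^ 2) _ _

theorem summable_struveSeries :
    Summable fun k : ℕ =>
      (x / 2) ^ (2 * k + 1) / (Gamma (k + 3 / 2) * Gamma (k + μ + 3 / 2)) := by
  refine ((summable_pow_div_Gamma_mul_Gamma ((x / 2) ^ 2) (3 / 2) (μ + 3 / 2)).mul_left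
    (x / 2)).congr fun k => ?_
  rw [pow_succ _ (2 * k), pow_mul, add_assoc]
  ring

theorem hasDerivAt_struveSeries : HasDerivAt (struveSeries μ) (struveDerivSeries μ x) x := by
  have hxR : x ∈ Set.Ioo (-(|x| + 1)) (|x| + 1) := abs_lt.mp (by linarith)
  refine hasDerivAt_tsum_of_isPreconnected
    (g := fun (k : ℕ) (y : ℝ) =>
      (y / 2) ^ (2 * k + 1) / (Gamma (k + 3 / 2) * Gamma (k + μ + 3 / 2)))
    (g' := fun (k : ℕ) (y : ℝ) =>
      (y / 2) ^ (2 * k) / (Gamma (k + 1 / 2) * Gamma (k + μ + 3 / 2)))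
    (summable_struveDerivSeries μ (|x| + 1)).abs isOpen_Ioo
    (convex_Ioo _ _).isPreconnected (fun k y _ => ?_) (fun k y hy => ?_) hxR
    (summable_struveSeries μ x) hxR
  · refine ((((hasDerivAt_id' y).div_const 2).fun_pow (2 * k + 1)).div_const
      (Gamma (k + 3 / 2) * Gamma (k + μ + 3 / 2))).congr_deriv ?_
    rw [div_eq_mul_inv _ (Gamma (k + 1 / 2) * _), mul_inv,
      inv_Gamma_eq_self_mul_inv_Gamma_add_one, Nat.add_sub_cancel]
    push_cast
    ring_nf
  · have hyR : |y / 2| ≤ |(|x| + 1) / 2| := by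
      rw [abs_div, abs_div]
      gcongr ?_ / _
      exact (abs_lt.mpr hy).le.trans (le_abs_self _)
    rw [Real.norm_eq_abs, abs_div, abs_div, abs_pow, abs_pow]
    gcongr

theorem struveDerivSeries_eq_inv_add :
    struveDerivSeries μ x =
      (√π * Gamma (μ + 3 / 2))⁻¹ + x / 2 * struveSeries (μ + 1) x := by
  rw [struveDerivSeries, (summable_struveDerivSeries μ x).tsum_eq_zero_add, struveSeries,
    ← tsum_mul_left]
  congr 1
  · simp only [CharP.cast_eq_zero, zero_add, mul_zero, pow_zero, Gamma_one_half_eq]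
    rw [one_div]
  · refine tsum_congr fun k => ?_
    push_cast
    ring_nf

theorem struveSeries_recurrence :
    struveSeries μ x =
      (μ + 1) * struveSeries (μ + 1) x + x / 2 * struveDerivSeries (μ + 1) x := by
  rw [struveSeries, struveSeries, struveDerivSeries, ← tsum_mul_left, ← tsum_mul_left,
    ← ((summable_struveSeries _ x).mul_left _).tsum_add
      ((summable_struveDerivSeries _ x).mul_left _)]
  refine tsum_congr fun k => ?_
  have h1 :
      (Gamma (k + μ + 3 / 2))⁻¹ = (k + μ + 3 / 2) * (Gamma (k + (μ + 1) + 3 / 2))⁻¹ := by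
    rw [inv_Gamma_eq_self_mul_inv_Gamma_add_one]
    ring_nf
  have h2 : (Gamma (k + 1 / 2))⁻¹ = (k + 1 / 2) * (Gamma (k + 3 / 2))⁻¹ := by
    rw [inv_Gamma_eq_self_mul_inv_Gamma_add_one]
    ring_nf
  simp only [div_eq_mul_inv (_ ^ _), mul_inv, h1, h2]
  ring

end

theorem modStruveL_eq_rpow_mul_struveSeries (μ : ℝ) {x : ℝ} (hx : 0 < x) :
    modStruveL μ x = (x / 2) ^ μ * struveSeries μ x := by
  rw [struveSeries, ← tsum_mul_left]
  refine tsum_congr fun k => ?_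
  rw [← mul_div_assoc, add_assoc, rpow_add (by positivity), ← rpow_natCast]
  push_cast
  ring_nf

theorem rpow_neg_mul_modStruveL {x : ℝ} (hx : 0 < x) (ν μ : ℝ) :
    x ^ (-ν) * modStruveL μ x = x ^ (μ - ν) / 2 ^ μ * struveSeries μ x := by
  rw [modStruveL_eq_rpow_mul_struveSeries _ hx, div_rpow hx.le zero_le_two, sub_eq_add_neg,
    rpow_add hx]
  ring

theorem struve_derivative_formula (ν n x : ℝ) (hn : n > -1) (hν : ν > -((n + 1) / 2))
    (hx : x > 0) :
    HasDerivAt (fun y : ℝ => y ^ (-ν) * modStruveL (ν + n + 1) y)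
      (((n + 1) / (2 * (ν + n + 1))) * (x ^ (-ν) * modStruveL (ν + n) x) +
        ((2 * ν + n + 1) / (2 * (ν + n + 1))) * (x ^ (-ν) * modStruveL (ν + n + 2) x) +
        (n + 2) * aConst ν n * x ^ (n + 1)) x := by
  have hf : (fun y : ℝ => y ^ (-ν) * modStruveL (ν + n + 1) y) =ᶠ[𝓝 x]
      fun y => y ^ (n + 1) / 2 ^ (ν + n + 1) * struveSeries (ν + n + 1) y := by
    filter_upwards [Ioi_mem_nhds hx] with y hy
    rw [rpow_neg_mul_modStruveL hy, show ν + n + 1 - ν = n + 1 by ring]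
  refine ((((hasDerivAt_rpow_const (p := n + 1) (Or.inl hx.ne')).div_const _).mul
    (hasDerivAt_struveSeries _ x)).congr_of_eventuallyEq hf).congr_deriv ?_
  have hμ : ν + n + 1 ≠ 0 := by linarith
  have hn2 : n + 2 ≠ 0 := by linarith
  have hG : Gamma (ν + n + 5 / 2) ≠ 0 := (Gamma_pos_of_pos (by linarith)).ne'
  have hπ : √π ≠ 0 := (sqrt_pos.mpr pi_pos).ne'
  have hx1 : x ^ (n + 1) = x ^ n * x := rpow_add_one hx.ne' n
  have hx2 : x ^ (n + 2) = x ^ n * x ^ 2 := by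
    rw [rpow_add hx, rpow_two]
  have h21 : (2 : ℝ) ^ (ν + n + 1) = 2 ^ (ν + n) * 2 := rpow_add_one two_ne_zero _
  have h22 : (2 : ℝ) ^ (ν + n + 2) = 2 ^ (ν + n) * 4 := by
    rw [rpow_add two_pos, rpow_two]
    norm_num
  rw [rpow_neg_mul_modStruveL hx, rpow_neg_mul_modStruveL hx, struveSeries_recurrence (ν + n),
    struveDerivSeries_eq_inv_add (ν + n + 1), aConst, show ν + n + 1 + 1 = ν + n + 2 by ring,
    show ν + n + 1 + 3 / 2 = ν + n + 5 / 2 by ring, show ν + n - ν = n by ring,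
    show ν + n + 2 - ν = n + 2 by ring, add_sub_cancel_right, hx1, hx2, h21, h22]
  field_simp
  ring
end
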